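/- arXiv:1007.4086 — 2 statements merged into one kernel-verified Lean document; each statement's English description precedes it below -/
import Mathlib

section
/- Let n ≥ 1 be an integer, let α > 0 and M > 1, and let f : ℝ^n → ℝ be continuously differentiable. Then for Lebesgue-almost every x ∈ ℝ^n, the function Θ_{α,M} ∘ f is differentiable at x and its gradient at x equals ∇f(x) if α ≤ |f(x)| ≤ Mα, and equals 0 otherwise. -/
open MeasureTheory Metric ENNReal

noncomputable section

/-- The Gaussian heat kernel `h_t(x) = (4πt)^{-n/2} exp(-‖x‖²/(4t))` on `ℝⁿ`. -/
def heatKernel (n : ℕ) (t : ℝ) (x : EuclideanSpace ℝ (Fin n)) : ℝ :=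
  (4 * Real.pi * t) ^ (-(n : ℝ) / 2) * Real.exp (-‖x‖ ^ 2 / (4 * t))

/-- The heat semigroup `H_t f (x) = (f ⋆ h_t)(x) = ∫ f(y) h_t(x-y) dy`. -/
def heatSG (n : ℕ) (f : EuclideanSpace ℝ (Fin n) → ℝ) (t : ℝ)
    (x : EuclideanSpace ℝ (Fin n)) : ℝ :=
  ∫ y, f y * heatKernel n t (x - y)

/-- Homogeneous Besov seminorm `‖f‖_{Ḃ^{-γ,∞}_∞} = sup_{t>0} t^{γ/2} ‖H_t f‖_{L^∞}`. -/
def besovNorm (n : ℕ) (γ : ℝ) (f : EuclideanSpace ℝ (Fin n) → ℝ) : ℝ≥0∞ :=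
  ⨆ (t : ℝ) (_ : 0 < t),
    ENNReal.ofReal (t ^ (γ / 2)) * ⨆ x, ENNReal.ofReal |heatSG n f t x|

/-- The Muckenhoupt `A₁` condition with constant `C`:
`(1/|B|)∫_B ω ≤ C ω(x)` for every open ball `B` and every `x ∈ B`. -/
def IsA1 (n : ℕ) (ω : EuclideanSpace ℝ (Fin n) → ℝ) (C : ℝ) : Prop :=
  ∀ (x z : EuclideanSpace ℝ (Fin n)) (r : ℝ), 0 < r → x ∈ ball z r →
    (volume (ball z r)).toReal⁻¹ * (∫ y in ball z r, ω y) ≤ C * ω x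

/-- The Muckenhoupt `A_p` condition (`1 < p < ∞`) with constant `C`. -/
def IsAp (n : ℕ) (p : ℝ) (ω : EuclideanSpace ℝ (Fin n) → ℝ) (C : ℝ) : Prop :=
  ∀ (z : EuclideanSpace ℝ (Fin n)) (r : ℝ), 0 < r →
    ((volume (ball z r)).toReal⁻¹ * ∫ y in ball z r, ω y) *
      ((volume (ball z r)).toReal⁻¹ * ∫ y in ball z r, ω y ^ (-(1 / (p - 1)))) ^ (p - 1) ≤ C

/-- The Laplacian `Δg(x) = ∑ᵢ ∂²g/∂xᵢ²(x)`. -/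
def lapl (n : ℕ) (g : EuclideanSpace ℝ (Fin n) → ℝ) (x : EuclideanSpace ℝ (Fin n)) : ℝ :=
  ∑ i : Fin n, fderiv ℝ (fun y => fderiv ℝ g y (EuclideanSpace.single i 1)) x
    (EuclideanSpace.single i 1)

/-- Fractional power `Λ^s f = (−Δ)^{s/2} f` via the Balakrishnan-type formula
`Λ^s f(x) = (1/Γ(1-s/2)) ∫₀^∞ t^{-s/2} (−Δ(H_t f))(x) dt`. -/
def fracLap (n : ℕ) (s : ℝ) (f : EuclideanSpace ℝ (Fin n) → ℝ)
    (x : EuclideanSpace ℝ (Fin n)) : ℝ :=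
  (Real.Gamma (1 - s / 2))⁻¹ *
    ∫ t in Set.Ioi (0 : ℝ), t ^ (-s / 2) * (-(lapl n (heatSG n f t) x))

/-- The potential `J^{-α/2} f(x) = (1/Γ(α/2)) ∫₀^∞ t^{α/2-1} H_t f(x) dt`. -/
def potential (n : ℕ) (α : ℝ) (f : EuclideanSpace ℝ (Fin n) → ℝ)
    (x : EuclideanSpace ℝ (Fin n)) : ℝ :=
  (Real.Gamma (α / 2))⁻¹ * ∫ t in Set.Ioi (0 : ℝ), t ^ (α / 2 - 1) * heatSG n f t x

/-- Uncentered Hardy–Littlewood maximal function. -/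
def maxFn (n : ℕ) (f : EuclideanSpace ℝ (Fin n) → ℝ) (x : EuclideanSpace ℝ (Fin n)) : ℝ≥0∞ :=
  ⨆ (z : EuclideanSpace ℝ (Fin n)) (r : ℝ) (_ : 0 < r) (_ : x ∈ ball z r),
    ENNReal.ofReal ((volume (ball z r)).toReal⁻¹ * ∫ y in ball z r, |f y|)

/-- The odd thresholding function `Θ_{α,M}`: it vanishes on `[0,α]`, equals `t - α` on
`[α, Mα]` and equals `(M-1)α` on `[Mα, ∞)`. -/
def theta (α M t : ℝ) : ℝ :=
  if 0 ≤ t then min (max (t - α) 0) ((M - 1) * α)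
  else -min (max (-t - α) 0) ((M - 1) * α)

/-! Away from the four kinks `±α`, `±Mα` the function `Θ_{α,M}` is locally affine with slope
`1` or `0`, so the ordinary chain rule applies. At a kink `Θ_{α,M}` is merely Lipschitz, which
still gives derivative `0` wherever `∇f = 0`; and on a level set of a differentiable function
the gradient vanishes almost everywhere, because along every line the points of the level set
where the directional derivative is nonzero are isolated, hence countable. -/

open Filter Topology Set

theorem countable_setOf_eq_and_hasDerivAt_ne_zero {F : Type*} [NormedAddCommGroup F]
    [NormedSpace ℝ F] {g g' : ℝ → F} (hg : ∀ t, HasDerivAt g (g' t) t) (c : F) :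
    {t | g t = c ∧ g' t ≠ 0}.Countable := by
  refine (HereditarilyLindelofSpace.isLindelof _).countable_of_isDiscrete
    (isDiscrete_iff_nhdsNE.2 fun t ht => inf_principal_eq_bot.2 ?_)
  filter_upwards [(hg t).eventually_ne ht.2] with s hs hst
  exact hs (hst.1.trans ht.1.symm)

section LevelSet

variable {E F : Type*} [NormedAddCommGroup E] [NormedSpace ℝ E] [FiniteDimensional ℝ E]
  [MeasurableSpace E] [BorelSpace E] [NormedAddCommGroup F] [NormedSpace ℝ F] [CompleteSpace F]
  [MeasurableSpace F] [BorelSpace F] (μ : Measure E) [μ.IsAddHaarMeasure] {f : E → F}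

theorem Differentiable.ae_fderiv_apply_eq_zero_of_eq (hf : Differentiable ℝ f) (c : F) (v : E) :
    ∀ᵐ x ∂μ, f x = c → fderiv ℝ f x v = 0 := by
  have hmeas : MeasurableSet {x | f x = c → fderiv ℝ f x v = 0} := by
    simp only [imp_iff_not_or, Set.ofPred_or]
    exact (hf.continuous.measurable (measurableSet_singleton c)).compl.union
      (measurable_fderiv_apply_const ℝ f v (measurableSet_singleton 0))
  refine ae_mem_of_ae_add_linearMap_mem (LinearMap.lsmul ℝ E |>.flip v) volume μ hmeas
    fun y => ?_
  have hline (t : ℝ) :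
      HasDerivAt (fun s : ℝ => f (y + s • v)) (fderiv ℝ f (y + t • v) v) t :=
    (hf _).hasFDerivAt.comp_hasDerivAt t
      (((hasDerivAt_id t).smul_const v).const_add y |>.congr_deriv (one_smul ℝ v))
  filter_upwards [measure_eq_zero_iff_ae_notMem.1
    ((countable_setOf_eq_and_hasDerivAt_ne_zero hline c).measure_zero volume)] with t ht hc
  by_contra hne
  exact ht ⟨hc, hne⟩

theorem Differentiable.ae_fderiv_eq_zero_of_eq (hf : Differentiable ℝ f) (c : F) :
    ∀ᵐ x ∂μ, f x = c → fderiv ℝ f x = 0 := by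
  let b := Module.finBasis ℝ E
  filter_upwards [ae_all_iff.2 fun i => hf.ae_fderiv_apply_eq_zero_of_eq μ c (b i)] with x hx hxc
  exact ContinuousLinearMap.coe_injective (b.ext fun i => hx i hxc)

end LevelSet

theorem LipschitzWith.hasFDerivAt_comp_of_hasFDerivAt_zero {E F G : Type*}
    [NormedAddCommGroup E] [NormedSpace ℝ E] [NormedAddCommGroup F] [NormedSpace ℝ F]
    [NormedAddCommGroup G] [NormedSpace ℝ G] {g : F → G} {K : NNReal} (hg : LipschitzWith K g)
    {f : E → F} {x : E} (hf : HasFDerivAt f (0 : E →L[ℝ] F) x) :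
    HasFDerivAt (g ∘ f) (0 : E →L[ℝ] G) x := by
  have hbig : (fun y => g (f y) - g (f x)) =O[𝓝 x] fun y => f y - f x :=
    .of_bound K (.of_forall fun y => by simpa only [dist_eq_norm] using hg.dist_le_mul (f y) (f x))
  refine .of_isLittleO ?_
  simpa using hbig.trans_isLittleO (by simpa using hf.isLittleO)

section Theta

variable {α M : ℝ}

theorem theta_lipschitzWith (hα : 0 ≤ α) (hM : 1 ≤ M) : LipschitzWith 2 (theta α M) := by
  set g : ℝ → ℝ := fun t => min (max (t - α) 0) ((M - 1) * α)
  have hc : 0 ≤ (M - 1) * α := mul_nonneg (by linarith) hα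
  have hθ : theta α M = fun t => g t - g (-t) := by
    funext t
    simp only [theta, g]
    split_ifs <;> simp only [min_def, max_def] <;> split_ifs <;> linarith
  have hg : LipschitzWith 1 g := by
    simpa using ((LipschitzWith.id.sub (LipschitzWith.const α)).max_const 0).min_const
      ((M - 1) * α)
  rw [hθ]
  exact (hg.sub (hg.comp LipschitzWith.id.neg)).weaken (by norm_num)

theorem theta_eq_zero_of_abs_lt (hα : 0 ≤ α) (hM : 1 ≤ M) {u : ℝ} (hu : |u| < α) :
    theta α M u = 0 := by
  have hc : 0 ≤ (M - 1) * α := mul_nonneg (by linarith) hα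
  obtain ⟨hu₁, hu₂⟩ := abs_lt.1 hu
  unfold theta; split_ifs <;> simp only [min_def, max_def] <;> split_ifs <;> linarith

theorem theta_eq_sub_of_mem_Ioo (hα : 0 ≤ α) {u : ℝ} (hu : u ∈ Ioo α (M * α)) :
    theta α M u = u - α := by
  obtain ⟨hu₁, hu₂⟩ := hu
  unfold theta; split_ifs <;> simp only [min_def, max_def] <;> split_ifs <;> linarith

theorem theta_eq_add_of_mem_Ioo (hα : 0 ≤ α) {u : ℝ} (hu : u ∈ Ioo (-(M * α)) (-α)) :
    theta α M u = u + α := by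
  obtain ⟨hu₁, hu₂⟩ := hu
  unfold theta; split_ifs <;> simp only [min_def, max_def] <;> split_ifs <;> linarith

theorem theta_eq_of_lt (hα : 0 ≤ α) (hM : 1 ≤ M) {u : ℝ} (hu : M * α < u) :
    theta α M u = (M - 1) * α := by
  have hc : 0 ≤ (M - 1) * α := mul_nonneg (by linarith) hα
  unfold theta; split_ifs <;> simp only [min_def, max_def] <;> split_ifs <;> linarith

theorem theta_eq_neg_of_lt_neg (hα : 0 ≤ α) (hM : 1 ≤ M) {u : ℝ} (hu : u < -(M * α)) :
    theta α M u = -((M - 1) * α) := by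
  have hc : 0 ≤ (M - 1) * α := mul_nonneg (by linarith) hα
  unfold theta; split_ifs <;> simp only [min_def, max_def] <;> split_ifs <;> linarith

theorem hasDerivAt_theta (hα : 0 ≤ α) (hM : 1 ≤ M) {t : ℝ} (h₁ : |t| ≠ α)
    (h₂ : |t| ≠ M * α) :
    HasDerivAt (theta α M) (if α ≤ |t| ∧ |t| ≤ M * α then 1 else 0) t := by
  rcases h₁.lt_or_gt with hlow | hhigh
  · rw [if_neg fun h => hlow.not_ge h.1]
    exact (hasDerivAt_const t 0).congr_of_eventuallyEq (eventually_of_mem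
      ((isOpen_lt continuous_abs continuous_const).mem_nhds hlow)
      fun _ => theta_eq_zero_of_abs_lt hα hM)
  rcases h₂.lt_or_gt with hmid | htop
  · rw [if_pos ⟨hhigh.le, hmid.le⟩]
    rcases le_or_gt 0 t with ht | ht
    · rw [abs_of_nonneg ht] at hhigh hmid
      exact ((hasDerivAt_id t).sub_const α).congr_of_eventuallyEq
        (eventually_of_mem (Ioo_mem_nhds hhigh hmid) fun _ => theta_eq_sub_of_mem_Ioo hα)
    · rw [abs_of_neg ht] at hhigh hmid
      exact ((hasDerivAt_id t).add_const α).congr_of_eventuallyEq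
        (eventually_of_mem (Ioo_mem_nhds (neg_lt.1 hmid) (lt_neg.1 hhigh))
          fun _ => theta_eq_add_of_mem_Ioo hα)
  · rw [if_neg fun h => htop.not_ge h.2]
    rcases le_or_gt 0 t with ht | ht
    · rw [abs_of_nonneg ht] at htop
      exact (hasDerivAt_const t _).congr_of_eventuallyEq
        (eventually_of_mem (Ioi_mem_nhds htop) fun _ => theta_eq_of_lt hα hM)
    · rw [abs_of_neg ht] at htop
      exact (hasDerivAt_const t _).congr_of_eventuallyEq
        (eventually_of_mem (Iio_mem_nhds (lt_neg.1 htop)) fun _ => theta_eq_neg_of_lt_neg hα hM)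

end Theta

theorem hasFDerivAt_theta_comp {E : Type*} [NormedAddCommGroup E] [NormedSpace ℝ E]
    {α M : ℝ} (hα : 0 ≤ α) (hM : 1 ≤ M) {f : E → ℝ} {f' : E →L[ℝ] ℝ} {x : E}
    (hf : HasFDerivAt f f' x) (hkink : |f x| = α ∨ |f x| = M * α → f' = 0) :
    HasFDerivAt (fun y => theta α M (f y))
      (if α ≤ |f x| ∧ |f x| ≤ M * α then f' else 0) x := by
  by_cases hk : |f x| = α ∨ |f x| = M * α
  · obtain rfl := hkink hk
    rw [ite_self]
    exact (theta_lipschitzWith hα hM).hasFDerivAt_comp_of_hasFDerivAt_zero hf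
  · obtain ⟨h₁, h₂⟩ := not_or.1 hk
    have h := (hasDerivAt_theta hα hM h₁ h₂).comp_hasFDerivAt x hf
    split_ifs at h ⊢ <;> simp only [one_smul, zero_smul] at h <;> exact h

theorem thresholding_chain_rule_general
    (n : ℕ) (α M : ℝ) (hα : 0 < α) (hM : 1 < M)
    (f : EuclideanSpace ℝ (Fin n) → ℝ) (hf : ContDiff ℝ 1 f) :
    ∀ᵐ x ∂(volume : Measure (EuclideanSpace ℝ (Fin n))),
      DifferentiableAt ℝ (fun y => theta α M (f y)) x ∧
      fderiv ℝ (fun y => theta α M (f y)) x =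
        (if α ≤ |f x| ∧ |f x| ≤ M * α then fderiv ℝ f x else 0) := by
  have hdf : Differentiable ℝ f := hf.differentiable one_ne_zero
  filter_upwards [hdf.ae_fderiv_eq_zero_of_eq volume α, hdf.ae_fderiv_eq_zero_of_eq volume (-α),
    hdf.ae_fderiv_eq_zero_of_eq volume (M * α),
    hdf.ae_fderiv_eq_zero_of_eq volume (-(M * α))] with x h₁ h₂ h₃ h₄
  have hkink : |f x| = α ∨ |f x| = M * α → fderiv ℝ f x = 0 := by
    rintro (h | h) <;> rcases eq_or_eq_neg_of_abs_eq h with h | h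
    exacts [h₁ h, h₂ h, h₃ h, h₄ h]
  have key := hasFDerivAt_theta_comp hα.le hM.le (hdf x).hasFDerivAt hkink
  exact ⟨key.differentiableAt, key.fderiv⟩

/-- **Thresholding lemma, part (3)**: for `f ∈ C¹(ℝⁿ)`, a.e. `x`, `Θ_{α,M} ∘ f` is
differentiable at `x` with derivative `∇f(x)` if `α ≤ |f(x)| ≤ Mα` and `0` otherwise. -/
theorem thresholding_chain_rule
    (n : ℕ) (hn : 1 ≤ n) (α M : ℝ) (hα : 0 < α) (hM : 1 < M)
    (f : EuclideanSpace ℝ (Fin n) → ℝ) (hf : ContDiff ℝ 1 f) :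
    ∀ᵐ x ∂(volume : Measure (EuclideanSpace ℝ (Fin n))),
      DifferentiableAt ℝ (fun y => theta α M (f y)) x ∧
      fderiv ℝ (fun y => theta α M (f y)) x =
        (if α ≤ |f x| ∧ |f x| ≤ M * α then fderiv ℝ f x else 0) :=
  thresholding_chain_rule_general n α M hα hM f hf
end
end

section
/- Let n ≥ 1 be an integer and let m : ℝ → ℂ be a Schwartz function. Define M_m : ℝ^n → ℂ by M_m(ξ) = m(‖ξ‖²). Then: (a) M_m is a Schwartz function on ℝ^n; (b) if moreover every derivative of m vanishes at the origin (m^{(k)}(0) = 0 for all k ≥ 0), then the inverse Fourier transform K = 𝓕^{−1} M_m, which is a Schwartz function on ℝ^n, has all vanishing moments: for every multi-index γ ∈ ℕ^n, ∫_{ℝ^n} x^γ K(x) dx = 0. -/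
open MeasureTheory Metric ENNReal

noncomputable section

/-! The map `ξ ↦ ‖ξ‖²` has temperate growth and `‖ξ‖ ≤ 1 + ‖ξ‖²`, so composing a Schwartz
function with it gives a Schwartz function. For `K = 𝓕⁻ M`, the `N`-th derivative of `𝓕 K = M`
at `0` is, up to the factor `(-2πi)^N`, the integral of `x ↦ (∏ j, ⟪x, v j⟫) • K x`, and every
monomial `x^γ` is such a product of coordinates. By Faà di Bruno, the derivatives of
`m ∘ ‖·‖²` at `0` are controlled by those of `m` at `‖0‖² = 0`, which all vanish. -/

open scoped FourierTransform RealInnerProductSpace SchwartzMap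

theorem iteratedFDeriv_comp_eq_zero_of_iteratedFDeriv_eq_zero
    {𝕜 E F G : Type*} [NontriviallyNormedField 𝕜]
    [NormedAddCommGroup E] [NormedSpace 𝕜 E] [NormedAddCommGroup F] [NormedSpace 𝕜 F]
    [NormedAddCommGroup G] [NormedSpace 𝕜 G] {g : F → G} {f : E → F} {N : ℕ} {x : E}
    (hg : ContDiff 𝕜 N g) (hf : ContDiff 𝕜 N f)
    (hflat : ∀ k ≤ N, iteratedFDeriv 𝕜 k g (f x) = 0) :
    iteratedFDeriv 𝕜 N (g ∘ f) x = 0 := by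
  set D : ℝ := 1 + ∑ i ∈ Finset.range (N + 1), ‖iteratedFDeriv 𝕜 i f x‖
  have hD : ∀ i, 1 ≤ i → i ≤ N → ‖iteratedFDeriv 𝕜 i f x‖ ≤ D ^ i := fun i hi hiN =>
    calc ‖iteratedFDeriv 𝕜 i f x‖
        ≤ ∑ j ∈ Finset.range (N + 1), ‖iteratedFDeriv 𝕜 j f x‖ :=
          Finset.single_le_sum (f := fun j => ‖iteratedFDeriv 𝕜 j f x‖)
            (fun _ _ => norm_nonneg _) (Finset.mem_range.2 (by omega))
      _ ≤ D := le_add_of_nonneg_left zero_le_one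
      _ ≤ D ^ i := le_self_pow₀ (le_add_of_nonneg_right (by positivity)) (by omega)
  have hbound := norm_iteratedFDeriv_comp_le hg hf le_rfl x (C := 0)
    (fun i hi => by rw [hflat i hi, norm_zero]) hD
  exact norm_le_zero_iff.mp (by simpa using hbound)

theorem Finset.exists_prod_pow_eq_prod_fin {ι : Type*} [Fintype ι] (γ : ι → ℕ) :
    ∃ σ : Fin (∑ i, γ i) → ι, ∀ {M : Type*} [CommMonoid M] (f : ι → M),
      ∏ i, f i ^ γ i = ∏ j, f (σ j) := by
  let e : (Σ i, Fin (γ i)) ≃ Fin (∑ i, γ i) := Fintype.equivFinOfCardEq (by simp)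
  refine ⟨fun j => (e.symm j).1, fun f => ?_⟩
  rw [Equiv.prod_comp e.symm (fun p => f p.1), ← Finset.univ_sigma_univ, Finset.prod_sigma]
  simp

namespace SchwartzMap

variable {V F : Type*} [NormedAddCommGroup V] [InnerProductSpace ℝ V]
  [NormedAddCommGroup F] [NormedSpace ℂ F]

def compNormSq (m : 𝓢(ℝ, F)) : 𝓢(V, F) :=
  compCLM ℂ (Function.hasTemperateGrowth_norm_sq V)
    ⟨1, 1, fun x => by
      rw [norm_pow, norm_norm]
      nlinarith [sq_nonneg (‖x‖ - 1)]⟩ m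

@[simp] theorem compNormSq_apply (m : 𝓢(ℝ, F)) (ξ : V) : compNormSq m ξ = m (‖ξ‖ ^ 2) := rfl

variable [FiniteDimensional ℝ V] [MeasurableSpace V] [BorelSpace V]

theorem integral_prod_inner_smul_eq_zero (K : 𝓢(V, F)) {N : ℕ}
    (hK : iteratedFDeriv ℝ N (𝓕 (K : V → F)) 0 = 0) (v : Fin N → V) :
    ∫ x, (∏ j, ⟪x, v j⟫) • K x = 0 := by
  have hint : Integrable (fun x => VectorFourier.fourierPowSMulRight (innerSL ℝ) K x N) :=
    VectorFourier.integrable_fourierPowSMulRight _ (K.integrable_pow_mul volume N)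
      K.continuous.aestronglyMeasurable
  have hmoment : ∫ x, VectorFourier.fourierPowSMulRight (innerSL ℝ) K x N = 0 := by
    rw [Real.iteratedFDeriv_fourier (fun k _ => K.integrable_pow_mul volume k)
      K.continuous.aestronglyMeasurable le_rfl, Real.fourier_eq] at hK
    simpa using hK
  have h := ContinuousMultilinearMap.integral_apply hint v
  simp only [hmoment, zero_apply, VectorFourier.fourierPowSMulRight_apply, integral_smul] at h
  refine (smul_eq_zero.mp h.symm).resolve_left (pow_ne_zero _ ?_)
  simp [Real.pi_ne_zero, Complex.I_ne_zero]

end SchwartzMap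

theorem radial_symbol_schwartz_and_vanishing_moments_general
    (n : ℕ) (m : SchwartzMap ℝ ℂ) :
    (∃ M : SchwartzMap (EuclideanSpace ℝ (Fin n)) ℂ, ∀ ξ, M ξ = m (‖ξ‖ ^ 2)) ∧
    ((∀ k : ℕ, iteratedDeriv k (m : ℝ → ℂ) 0 = 0) →
      ∃ K : SchwartzMap (EuclideanSpace ℝ (Fin n)) ℂ,
        (∀ x, K x = FourierTransformInv.fourierInv (fun ξ : EuclideanSpace ℝ (Fin n) => m (‖ξ‖ ^ 2)) x) ∧
        ∀ γ : Fin n → ℕ, (∫ x : EuclideanSpace ℝ (Fin n),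
            (∏ i, (x i : ℂ) ^ γ i) * K x) = 0) := by
  set M : 𝓢(EuclideanSpace ℝ (Fin n), ℂ) := SchwartzMap.compNormSq m
  set K : 𝓢(EuclideanSpace ℝ (Fin n), ℂ) := 𝓕⁻ M
  refine ⟨⟨M, SchwartzMap.compNormSq_apply m⟩, fun hm => ⟨K, fun x => by rw [SchwartzMap.fourierInv_coe]; rfl,
    fun γ => ?_⟩⟩
  have hK_flat : ∀ N, iteratedFDeriv ℝ N (𝓕 (K : _ → ℂ)) 0 = 0 := fun N => by
    rw [← SchwartzMap.fourier_coe, FourierTransform.fourier_fourierInv_eq]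
    show iteratedFDeriv ℝ N ((m : ℝ → ℂ) ∘ fun ξ => ‖ξ‖ ^ 2) 0 = 0
    exact iteratedFDeriv_comp_eq_zero_of_iteratedFDeriv_eq_zero (m.smooth N) (contDiff_norm_sq ℝ)
      fun k _ => norm_eq_zero.mp (by simp [norm_iteratedFDeriv_eq_norm_iteratedDeriv, hm k])
  obtain ⟨σ, hσ⟩ := Finset.exists_prod_pow_eq_prod_fin γ
  refine (integral_congr_ae (.of_forall fun x => ?_)).trans
    (K.integral_prod_inner_smul_eq_zero (hK_flat _) fun j => EuclideanSpace.single (σ j) 1)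
  rw [hσ]
  simp [EuclideanSpace.inner_single_right]

/-- **Corollary 5.1 on `ℝⁿ`**: for a Schwartz function `m : ℝ → ℂ`, the radial symbol
`M_m(ξ) = m(‖ξ‖²)` is a Schwartz function on `ℝⁿ`; and if all derivatives of `m` vanish
at the origin, then the kernel `K = 𝓕⁻¹ M_m` is a Schwartz function all of whose moments
vanish: `∫ x^γ K(x) dx = 0` for every multi-index `γ`. -/
theorem radial_symbol_schwartz_and_vanishing_moments
    (n : ℕ) (hn : 1 ≤ n) (m : SchwartzMap ℝ ℂ) :
    (∃ M : SchwartzMap (EuclideanSpace ℝ (Fin n)) ℂ, ∀ ξ, M ξ = m (‖ξ‖ ^ 2)) ∧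
    ((∀ k : ℕ, iteratedDeriv k (m : ℝ → ℂ) 0 = 0) →
      ∃ K : SchwartzMap (EuclideanSpace ℝ (Fin n)) ℂ,
        (∀ x, K x = FourierTransformInv.fourierInv (fun ξ : EuclideanSpace ℝ (Fin n) => m (‖ξ‖ ^ 2)) x) ∧
        ∀ γ : Fin n → ℕ, (∫ x : EuclideanSpace ℝ (Fin n),
            (∏ i, (x i : ℂ) ^ γ i) * K x) = 0) :=
  radial_symbol_schwartz_and_vanishing_moments_general n m
end
end
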